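/- Let δ_R, δ_B > 0 be real. For every μ ∈ ℂ with μ ≠ 0 there exists λ ∈ ℂ such that μ² − tr T₀(λ)·μ + 1/(δ_R δ_B) = 0, i.e. μ is an eigenvalue of the transition matrix T₀(λ). -/
import Mathlib


/-- `c(λ) = cos ω` where `ω` is a complex square root of `λ`
(independent of the choice of square root). -/
noncomputable def cf (z : ℂ) : ℂ := Complex.cos (z ^ ((1 : ℂ) / 2))

/-- `s(λ) = sin(ω)/ω` where `ω` is a complex square root of `λ`
(independent of the choice of square root), with `s(0) = 1`. -/
noncomputable def sf (z : ℂ) : ℂ :=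
  if z = 0 then 1 else Complex.sin (z ^ ((1 : ℂ) / 2)) / z ^ ((1 : ℂ) / 2)

/-- The edge propagation matrix `M(λ)`; note `c'(λ) = -λ·s(λ)` and `s'(λ) = c(λ)`. -/
noncomputable def Mmat (lam : ℂ) : Matrix (Fin 2) (Fin 2) ℂ :=
  !![cf lam, sf lam; -lam * sf lam, cf lam]

/-- The jump matrix `J_δ = diag(1, 1/δ)`. -/
noncomputable def Jmat (d : ℝ) : Matrix (Fin 2) (Fin 2) ℂ := !![1, 0; 0, 1 / (d : ℂ)]

/-- The transition matrix `T₀(λ) = J_R · M(λ) · J_B · M(λ)`. -/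
noncomputable def T0 (dR dB : ℝ) (lam : ℂ) : Matrix (Fin 2) (Fin 2) ℂ :=
  Jmat dR * Mmat lam * Jmat dB * Mmat lam

lemma hw2 (lam : ℂ) : (lam ^ ((1:ℂ)/2)) ^ 2 = lam := by
  rw [one_div]
  exact_mod_cast Complex.cpow_nat_inv_pow lam (n := 2) two_ne_zero

lemma sf_sq (lam : ℂ) : lam * sf lam ^ 2 = 1 - cf lam ^ 2 := by
  unfold sf cf
  by_cases h : lam = 0
  · simp [h, Complex.zero_cpow (by norm_num : (1:ℂ)/2 ≠ 0)]
  · have hw : lam ^ ((1:ℂ)/2) ≠ 0 := by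
      intro h0
      have := hw2 lam
      rw [h0] at this
      simp at this
      exact h this.symm
    rw [if_neg h]
    have hp := Complex.sin_sq_add_cos_sq (lam ^ ((1:ℂ)/2))
    rw [div_pow, hw2, mul_div_cancel₀ _ h]
    linear_combination hp

lemma trace_T0 (dR dB : ℝ) (lam : ℂ) :
    (T0 dR dB lam).trace =
      cf lam ^ 2 * ((1 + 1/(dB:ℂ)) * (1 + 1/(dR:ℂ))) - (1/(dR:ℂ) + 1/(dB:ℂ)) := by
  have key := sf_sq lam
  simp [T0, Mmat, Jmat, Matrix.trace, Matrix.mul_apply, Fin.sum_univ_two, Matrix.diag]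
  linear_combination (-(1:ℂ)/dB - 1/dR) * key

lemma cf_surj (t : ℂ) : ∃ lam, cf lam = t := by
  obtain ⟨w, hw⟩ := Complex.cos_surjective t
  refine ⟨w ^ 2, ?_⟩
  unfold cf
  have h2 : ((w ^ 2 : ℂ) ^ ((1:ℂ)/2)) ^ 2 = w ^ 2 := hw2 _
  have hz : ((w ^ 2 : ℂ) ^ ((1:ℂ)/2) - w) * ((w ^ 2 : ℂ) ^ ((1:ℂ)/2) + w) = 0 := by
    linear_combination h2
  rcases mul_eq_zero.1 hz with h | h
  · rw [sub_eq_zero] at h; rw [h, hw]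
  · rw [eq_neg_of_add_eq_zero_left h, Complex.cos_neg, hw]

theorem stmt_17 (dR dB : ℝ) (hR : 0 < dR) (hB : 0 < dB) (μ : ℂ) (hμ : μ ≠ 0) :
    ∃ lam : ℂ, μ ^ 2 - (T0 dR dB lam).trace * μ + 1 / ((dR : ℂ) * dB) = 0 := by
  have hRz : (dR : ℂ) ≠ 0 := by exact_mod_cast hR.ne'
  have hBz : (dB : ℂ) ≠ 0 := by exact_mod_cast hB.ne'
  set A : ℂ := (1 + 1/(dB:ℂ)) * (1 + 1/(dR:ℂ)) with hAdef
  have hA : A ≠ 0 := by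
    apply mul_ne_zero
    · have : (0:ℝ) < 1 + 1/dB := by positivity
      intro h; apply this.ne'; exact_mod_cast (by push_cast at h ⊢; exact_mod_cast h : ((1 + 1/dB : ℝ) : ℂ) = 0)
    · have : (0:ℝ) < 1 + 1/dR := by positivity
      intro h; apply this.ne'; exact_mod_cast (by push_cast at h ⊢; exact_mod_cast h : ((1 + 1/dR : ℝ) : ℂ) = 0)
  set τ : ℂ := μ + 1/(((dR:ℂ)*dB)*μ) with hτ
  set v : ℂ := (τ + (1/(dR:ℂ) + 1/(dB:ℂ)))/A with hv
  obtain ⟨t, ht⟩ : ∃ t : ℂ, t ^ 2 = v := ⟨v ^ ((1:ℂ)/2), hw2 v⟩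
  obtain ⟨lam, hl⟩ := cf_surj t
  refine ⟨lam, ?_⟩
  have htr : (T0 dR dB lam).trace = μ + 1/(((dR:ℂ)*dB)*μ) := by
    rw [trace_T0, hl, ht, hv, div_mul_cancel₀ _ hA, hτ]; ring
  rw [htr]
  have hx : 1/(((dR:ℂ)*dB)*μ) * μ = 1/((dR:ℂ)*dB) := by
    field_simp
  linear_combination -hx
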